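/- arXiv:2510.22458 — 4 statements merged into one kernel-verified Lean document; each statement's English description precedes it below -/
import Mathlib

section
/- Let B be a d×d real symmetric matrix and A an m×d real matrix. Suppose AA^T ⪰ γ_A·I with γ_A > 0, ‖B‖ ≤ Υ_B, and Z is a d×(d−m) matrix whose columns are orthonormal and span the null space of A. If Z^T B Z ⪰ γ·I for some γ > 0, then for any δ ≥ (Υ_B + γ/2 + 2Υ_B²/γ)/γ_A we have B + δ·A^T A ⪰ (γ/2)·I. -/
/-!
Split `x = x₀ + x₁` with `x₁ = Aᵀ u`, `u = (A Aᵀ)⁻¹ A x`, so that `A x₀ = 0` and the two parts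
are orthogonal. On `x₀ = Z w` the curvature hypothesis gives `x₀ᵀ B x₀ ≥ γ ‖x₀‖²`; on `x₁` the
bound `A Aᵀ ⪰ γA I` gives `‖A x‖² = ‖A x₁‖² ≥ γA ‖x₁‖²`. Bounding the cross terms by `‖B‖`, the
penalty `δ ‖A x‖² ≥ (ΥB + γ/2 + 2ΥB²/γ) ‖x₁‖²` leaves
`γ/2 ‖x₀‖² - 2 ΥB ‖x₀‖ ‖x₁‖ + 2 ΥB²/γ ‖x₁‖² = (γ ‖x₀‖ - 2 ΥB ‖x₁‖)² / (2γ) ≥ 0`.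
-/

open scoped Matrix.Norms.L2Operator
open Matrix WithLp

namespace Matrix

variable {k m n : Type*}

theorem PosSemidef.posDef_of_sub_smul_one [DecidableEq n] {M : Matrix n n ℝ} {c : ℝ}
    (h : (M - c • 1).PosSemidef) (hc : 0 < c) : M.PosDef := by
  simpa using PosDef.posSemidef_add h (PosDef.one.smul hc)

variable [Fintype k] [Fintype m] [Fintype n]

theorem dotProduct_self_eq_norm_sq (x : n → ℝ) : x ⬝ᵥ x = ‖toLp 2 x‖ ^ 2 := by
  rw [← real_inner_self_eq_norm_sq, EuclideanSpace.inner_toLp_toLp, star_trivial]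

theorem abs_dotProduct_mulVec_le [DecidableEq n] (M : Matrix m n ℝ) (x : m → ℝ) (y : n → ℝ) :
    |x ⬝ᵥ M *ᵥ y| ≤ ‖M‖ * ‖toLp 2 x‖ * ‖toLp 2 y‖ :=
  calc |x ⬝ᵥ M *ᵥ y| = |inner ℝ (toLp 2 x) (toLp 2 (M *ᵥ y))| := by
        rw [EuclideanSpace.inner_toLp_toLp, star_trivial, dotProduct_comm]
    _ ≤ ‖toLp 2 x‖ * ‖toLp 2 (M *ᵥ y)‖ := abs_real_inner_le_norm _ _
    _ ≤ ‖toLp 2 x‖ * (‖M‖ * ‖toLp 2 y‖) := by gcongr; exact M.l2_opNorm_mulVec (toLp 2 y)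
    _ = ‖M‖ * ‖toLp 2 x‖ * ‖toLp 2 y‖ := by ring

theorem PosSemidef.mul_dotProduct_self_le [DecidableEq n] {M : Matrix n n ℝ} {c : ℝ}
    (h : (M - c • 1).PosSemidef) (v : n → ℝ) :
    c * (v ⬝ᵥ v) ≤ v ⬝ᵥ M *ᵥ v := by
  have := h.dotProduct_mulVec_nonneg v
  rw [star_trivial, sub_mulVec, smul_mulVec, one_mulVec, dotProduct_sub, dotProduct_smul,
    smul_eq_mul] at this
  linarith

theorem mul_dotProduct_self_le_of_posSemidef_mul_transpose_sub [DecidableEq m]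
    {A : Matrix m n ℝ} {c : ℝ} (hc : 0 ≤ c) (hA : (A * Aᵀ - c • 1).PosSemidef) (u : m → ℝ) :
    c * (Aᵀ *ᵥ u ⬝ᵥ Aᵀ *ᵥ u) ≤ A *ᵥ Aᵀ *ᵥ u ⬝ᵥ A *ᵥ Aᵀ *ᵥ u := by
  set ν := (A * Aᵀ - c • 1) *ᵥ u
  have hνu : 0 ≤ u ⬝ᵥ ν := by simpa using hA.dotProduct_mulVec_nonneg u
  -- `A Aᵀ u = ν + c u`, so the difference of the two sides is `ν ⬝ ν + c (u ⬝ ν)`.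
  have hAAt : A *ᵥ Aᵀ *ᵥ u = ν + c • u := by
    simp only [ν, sub_mulVec, smul_mulVec, one_mulVec, mulVec_mulVec, sub_add_cancel]
  have hAtu : Aᵀ *ᵥ u ⬝ᵥ Aᵀ *ᵥ u = u ⬝ᵥ (ν + c • u) := by
    rw [dotProduct_transpose_mulVec, hAAt]
  rw [hAtu, hAAt]
  simp only [dotProduct_add, add_dotProduct, dotProduct_smul, smul_dotProduct, smul_eq_mul,
    dotProduct_comm ν u]
  linarith [star_trivial ν ▸ dotProduct_self_star_nonneg ν, mul_nonneg hc hνu]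

theorem exists_eq_add_transpose_mulVec [DecidableEq m] {A : Matrix m n ℝ} (hA : IsUnit (A * Aᵀ))
    (x : n → ℝ) : ∃ x₀ u, A *ᵥ x₀ = 0 ∧ x = x₀ + Aᵀ *ᵥ u := by
  refine ⟨x - Aᵀ *ᵥ (A * Aᵀ)⁻¹ *ᵥ A *ᵥ x, (A * Aᵀ)⁻¹ *ᵥ A *ᵥ x, ?_, (sub_add_cancel _ _).symm⟩
  rw [mulVec_sub, mulVec_mulVec, mulVec_mulVec,
    mul_nonsing_inv _ ((isUnit_iff_isUnit_det _).mp hA), one_mulVec, sub_self]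

theorem mul_dotProduct_self_le_of_posSemidef_transpose_mul_mul [DecidableEq k]
    {B : Matrix n n ℝ} {Z : Matrix n k ℝ} {c : ℝ} (hZ : Zᵀ * Z = 1)
    (h : (Zᵀ * B * Z - c • 1).PosSemidef) (w : k → ℝ) :
    c * (Z *ᵥ w ⬝ᵥ Z *ᵥ w) ≤ Z *ᵥ w ⬝ᵥ B *ᵥ Z *ᵥ w := by
  have hnorm : Z *ᵥ w ⬝ᵥ Z *ᵥ w = w ⬝ᵥ w := by
    rw [← dotProduct_transpose_mulVec, mulVec_mulVec, hZ, one_mulVec]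
  have hquad : w ⬝ᵥ (Zᵀ * B * Z) *ᵥ w = Z *ᵥ w ⬝ᵥ B *ᵥ Z *ᵥ w := by
    rw [Matrix.mul_assoc, ← mulVec_mulVec, dotProduct_transpose_mulVec, dotProduct_comm,
      mulVec_mulVec]
  simpa only [hnorm, hquad] using h.mul_dotProduct_self_le w

theorem half_mul_dotProduct_self_le [DecidableEq n] {B : Matrix n n ℝ} {Υ γ : ℝ} (hγ : 0 < γ)
    (hB : ‖B‖ ≤ Υ) {x₀ x₁ : n → ℝ} (horth : x₀ ⬝ᵥ x₁ = 0)
    (h₀ : γ * (x₀ ⬝ᵥ x₀) ≤ x₀ ⬝ᵥ B *ᵥ x₀) :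
    γ / 2 * ((x₀ + x₁) ⬝ᵥ (x₀ + x₁)) ≤
      (x₀ + x₁) ⬝ᵥ B *ᵥ (x₀ + x₁) + (Υ + γ / 2 + 2 * Υ ^ 2 / γ) * (x₁ ⬝ᵥ x₁) := by
  have hcross (y z : n → ℝ) : -(Υ * ‖toLp 2 y‖ * ‖toLp 2 z‖) ≤ y ⬝ᵥ B *ᵥ z :=
    neg_le_of_abs_le <| (abs_dotProduct_mulVec_le B y z).trans <| by gcongr
  have hsq : (x₀ + x₁) ⬝ᵥ (x₀ + x₁) = x₀ ⬝ᵥ x₀ + x₁ ⬝ᵥ x₁ := by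
    simp only [add_dotProduct, dotProduct_add, horth, dotProduct_comm x₁ x₀]
    ring
  have hquad : (x₀ + x₁) ⬝ᵥ B *ᵥ (x₀ + x₁) =
      x₀ ⬝ᵥ B *ᵥ x₀ + x₀ ⬝ᵥ B *ᵥ x₁ + x₁ ⬝ᵥ B *ᵥ x₀ + x₁ ⬝ᵥ B *ᵥ x₁ := by
    simp only [mulVec_add, add_dotProduct, dotProduct_add]
    ring
  rw [hsq, hquad, dotProduct_self_eq_norm_sq, dotProduct_self_eq_norm_sq]
  rw [dotProduct_self_eq_norm_sq] at h₀
  have h₀₁ := hcross x₀ x₁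
  have h₁₀ := hcross x₁ x₀
  have h₁₁ := hcross x₁ x₁
  set a := ‖toLp 2 x₀‖
  set b := ‖toLp 2 x₁‖
  have hsquare : 0 ≤ γ / 2 * a ^ 2 - 2 * Υ * a * b + 2 * Υ ^ 2 / γ * b ^ 2 := by
    have : γ / 2 * a ^ 2 - 2 * Υ * a * b + 2 * Υ ^ 2 / γ * b ^ 2 =
        (γ * a - 2 * Υ * b) ^ 2 / (2 * γ) := by
      field_simp
      ring
    rw [this]
    positivity
  linarith

end Matrix

/-- If `B` is a symmetric `d×d` real matrix with `‖B‖ ≤ ΥB`,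
`A` is an `m×d` matrix with `A Aᵀ ⪰ γA • I` (`γA > 0`), and `Z` is a `d×(d−m)`
matrix with orthonormal columns spanning the null space of `A`, and
`Zᵀ B Z ⪰ γ • I` for some `γ > 0`, then for any
`δ ≥ (ΥB + γ/2 + 2ΥB²/γ)/γA` we have `B + δ Aᵀ A ⪰ (γ/2) • I`. -/
theorem stmt0 {d m : ℕ} (B : Matrix (Fin d) (Fin d) ℝ) (A : Matrix (Fin m) (Fin d) ℝ)
    (Z : Matrix (Fin d) (Fin (d - m)) ℝ) (γA ΥB γ : ℝ)
    (hγA : 0 < γA) (hγ : 0 < γ)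
    (hBsymm : B.IsSymm)
    (hA : (A * A.transpose - γA • (1 : Matrix (Fin m) (Fin m) ℝ)).PosSemidef)
    (hBnorm : ‖B‖ ≤ ΥB)
    (hZorth : Z.transpose * Z = (1 : Matrix (Fin (d - m)) (Fin (d - m)) ℝ))
    (hZnull : ∀ v : Fin d → ℝ, A.mulVec v = 0 ↔ ∃ w : Fin (d - m) → ℝ, Z.mulVec w = v)
    (hcurv : (Z.transpose * B * Z - γ • (1 : Matrix (Fin (d - m)) (Fin (d - m)) ℝ)).PosSemidef) :
    ∀ δ : ℝ, (ΥB + γ / 2 + 2 * ΥB ^ 2 / γ) / γA ≤ δ →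
      (B + δ • (A.transpose * A) - (γ / 2) • (1 : Matrix (Fin d) (Fin d) ℝ)).PosSemidef := by
  intro δ hδ
  have hΥB : 0 ≤ ΥB := (norm_nonneg B).trans hBnorm
  have hδγA : ΥB + γ / 2 + 2 * ΥB ^ 2 / γ ≤ δ * γA := (div_le_iff₀ hγA).mp hδ
  have hδ₀ : 0 ≤ δ := le_trans (by positivity) hδ
  have hsymm : (B + δ • (Aᵀ * A) - (γ / 2) • 1).IsHermitian := by
    simp [IsHermitian, transpose_add, transpose_sub, transpose_smul, transpose_mul, hBsymm.eq]
  refine .of_dotProduct_mulVec_nonneg hsymm fun x => ?_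
  obtain ⟨x₀, u, hAx₀, rfl⟩ :=
    exists_eq_add_transpose_mulVec (hA.posDef_of_sub_smul_one hγA).isUnit x
  obtain ⟨w, rfl⟩ := (hZnull x₀).mp hAx₀
  have horth : Z *ᵥ w ⬝ᵥ Aᵀ *ᵥ u = 0 := by
    rw [dotProduct_transpose_mulVec, hAx₀, dotProduct_zero]
  have hB := half_mul_dotProduct_self_le hγ hBnorm horth
    (mul_dotProduct_self_le_of_posSemidef_transpose_mul_mul hZorth hcurv w)
  have hAu := mul_dotProduct_self_le_of_posSemidef_mul_transpose_sub hγA.le hA u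
  have hform (y : Fin d → ℝ) : y ⬝ᵥ (B + δ • (Aᵀ * A) - (γ / 2) • 1) *ᵥ y =
      y ⬝ᵥ B *ᵥ y + δ * (A *ᵥ y ⬝ᵥ A *ᵥ y) - γ / 2 * (y ⬝ᵥ y) := by
    simp only [sub_mulVec, add_mulVec, smul_mulVec, one_mulVec, dotProduct_sub, dotProduct_add,
      dotProduct_smul, smul_eq_mul, ← mulVec_mulVec, dotProduct_transpose_mulVec]
  have hAx : A *ᵥ (Z *ᵥ w + Aᵀ *ᵥ u) = A *ᵥ Aᵀ *ᵥ u := by rw [mulVec_add, hAx₀, zero_add]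
  rw [star_trivial, hform, hAx]
  have hpenalty := mul_le_mul_of_nonneg_right hδγA
    (star_trivial (Aᵀ *ᵥ u) ▸ dotProduct_self_star_nonneg (Aᵀ *ᵥ u))
  linarith [mul_le_mul_of_nonneg_left hAu hδ₀]
end

section
/- Let Δ be a random vector in R^d with mutually independent entries, each symmetrically distributed about 0 with |Δ^j| ∈ [κ₁, κ₂] for κ₁, κ₂ > 0, and with all entries identically distributed. Then ‖E[(Δ^TΔ)·Δ^{-1}Δ^{-T}] − I‖ = (d−1)·E[(Δ^1)²]·E[1/(Δ^1)²], where Δ^{-1} is the entrywise reciprocal and ‖·‖ is the operator norm. -/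
open MeasureTheory ProbabilityTheory
open scoped Matrix.Norms.L2Operator

/-!
Write `A = E[(Δ¹)²]` and `B = E[1/(Δ¹)²]`. The `(i,j)` entry of `E[(ΔᵀΔ)Δ⁻¹Δ⁻ᵀ]` is
`Σₗ E[(Δˡ)²/(ΔⁱΔʲ)]`. Off the diagonal every summand factors, by independence, into a product
containing `E[Δʲ]` or `E[1/Δʲ]`, both `0` by symmetry. On the diagonal the summand `l = i` is `1`
and, by independence and identical distribution, each of the other `d - 1` summands is
`E[(Δˡ)²]·E[1/(Δⁱ)²] = A·B`. Hence
`E[(ΔᵀΔ)Δ⁻¹Δ⁻ᵀ] − I = (d−1)AB · I`, whose operator norm is `(d−1)AB`.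
-/

section

variable {Ω : Type*} [MeasurableSpace Ω] {μ : Measure Ω}

theorem integral_comp_eq_zero_of_map_eq_map_neg {Y : Ω → ℝ} (hY : Measurable Y)
    (hsymm : μ.map Y = μ.map (fun ω => -Y ω)) {g : ℝ → ℝ} (hg : Measurable g)
    (hodd : ∀ x, g (-x) = -g x) :
    ∫ ω, g (Y ω) ∂μ = 0 := by
  have hident : IdentDistrib Y (fun ω => -Y ω) μ μ :=
    ⟨hY.aemeasurable, hY.neg.aemeasurable, hsymm⟩
  have h := (hident.comp hg).integral_eq
  simp only [Function.comp_def, hodd, integral_neg] at h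
  exact self_eq_neg.mp h

theorem integral_sq_div_mul_self_of_indepFun {Y Z : Ω → ℝ} (hY : Measurable Y)
    (hZ : Measurable Z) (hind : IndepFun Y Z μ) :
    ∫ ω, Y ω ^ 2 / (Z ω * Z ω) ∂μ = (∫ ω, Y ω ^ 2 ∂μ) * ∫ ω, 1 / Z ω ^ 2 ∂μ := by
  have hind' : IndepFun (fun ω => Y ω ^ 2) (fun ω => 1 / Z ω ^ 2) μ :=
    hind.comp (measurable_id.pow_const 2) (measurable_const.div (measurable_id.pow_const 2))
  simp_rw [← sq, div_eq_mul_one_div (Y _ ^ 2)]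
  exact hind'.integral_fun_mul_eq_mul_integral (hY.pow_const 2).aestronglyMeasurable
    (measurable_const.div (hZ.pow_const 2)).aestronglyMeasurable

end

section IndependentCoordinates

variable {Ω ι : Type*} [MeasurableSpace Ω] {μ : Measure Ω} {X : ι → Ω → ℝ}

theorem integral_sq_div_mul_eq_zero (hX : ∀ k, Measurable (X k)) (hindep : iIndepFun X μ)
    {i j : ι} (hij : i ≠ j) (hsymm : μ.map (X j) = μ.map (fun ω => -X j ω)) (l : ι) :
    ∫ ω, X l ω ^ 2 / (X i ω * X j ω) ∂μ = 0 := by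
  have hinv : ∫ ω, 1 / X j ω ∂μ = 0 :=
    integral_comp_eq_zero_of_map_eq_map_neg (hX j) hsymm (measurable_const.div measurable_id)
      fun x => by rw [one_div_neg_eq_neg_one_div]
  by_cases hlj : l = j
  · subst hlj
    have hmean : ∫ ω, X l ω ∂μ = 0 :=
      integral_comp_eq_zero_of_map_eq_map_neg (hX l) hsymm measurable_id fun _ => rfl
    have hsplit : ∀ ω, X l ω ^ 2 / (X i ω * X l ω) = X l ω * (1 / X i ω) := fun ω => by
      rcases eq_or_ne (X l ω) 0 with h | h
      · simp [h]
      · rw [sq, mul_comm (X i ω), mul_div_mul_left _ _ h, mul_one_div]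
    have hind : IndepFun (X l) (fun ω => 1 / X i ω) μ :=
      (hindep.indepFun (Ne.symm hij)).comp measurable_id (measurable_const.div measurable_id)
    simp_rw [hsplit]
    rw [hind.integral_fun_mul_eq_mul_integral (hX l).aestronglyMeasurable
      (measurable_const.div (hX i)).aestronglyMeasurable, hmean, zero_mul]
  · have hsplit : ∀ ω, X l ω ^ 2 / (X i ω * X j ω) = X l ω ^ 2 / X i ω * (1 / X j ω) :=
      fun ω => by rw [mul_one_div, div_div]
    have hind : IndepFun (fun ω => X l ω ^ 2 / X i ω) (fun ω => 1 / X j ω) μ :=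
      (hindep.indepFun_prodMk hX l i j hlj hij).comp
        ((measurable_fst.pow_const 2).div measurable_snd) (measurable_const.div measurable_id)
    simp_rw [hsplit]
    rw [hind.integral_fun_mul_eq_mul_integral
      (((hX l).pow_const 2).div (hX i)).aestronglyMeasurable
      (measurable_const.div (hX j)).aestronglyMeasurable, hinv, mul_zero]

theorem integrable_sq_div_mul_of_abs_bounds [IsFiniteMeasure μ] (hX : ∀ k, Measurable (X k))
    {κ₁ κ₂ : ℝ} (hκ₁ : 0 < κ₁) (hbound : ∀ k, ∀ᵐ ω ∂μ, κ₁ ≤ |X k ω| ∧ |X k ω| ≤ κ₂)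
    (i j l : ι) :
    Integrable (fun ω => X l ω ^ 2 / (X i ω * X j ω)) μ := by
  refine .of_bound (((hX l).pow_const 2).div ((hX i).mul (hX j))).aestronglyMeasurable
    (κ₂ ^ 2 / (κ₁ * κ₁)) ?_
  filter_upwards [hbound i, hbound j, hbound l] with ω hi hj hl
  rw [Real.norm_eq_abs, abs_div, abs_mul, abs_pow]
  exact div_le_div₀ (by positivity) (pow_le_pow_left₀ (abs_nonneg _) hl.2 2) (by positivity)
    (mul_le_mul hi.1 hj.1 hκ₁.le (abs_nonneg _))

theorem integral_sum_sq_div_mul_of_ne [Fintype ι] (hX : ∀ k, Measurable (X k))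
    (hindep : iIndepFun X μ) {i j : ι} (hij : i ≠ j)
    (hsymm : μ.map (X j) = μ.map (fun ω => -X j ω))
    (hint : ∀ l, Integrable (fun ω => X l ω ^ 2 / (X i ω * X j ω)) μ) :
    ∫ ω, (∑ l, X l ω ^ 2) / (X i ω * X j ω) ∂μ = 0 := by
  simp_rw [Finset.sum_div]
  rw [integral_finsetSum _ fun l _ => hint l]
  exact Finset.sum_eq_zero fun l _ => integral_sq_div_mul_eq_zero hX hindep hij hsymm l

theorem integral_sum_sq_div_mul_self [Fintype ι] [IsProbabilityMeasure μ]
    (hX : ∀ k, Measurable (X k)) (hindep : iIndepFun X μ) {i₀ : ι}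
    (hident : ∀ k, IdentDistrib (X k) (X i₀) μ μ) {i : ι} (hne : ∀ᵐ ω ∂μ, X i ω ≠ 0)
    (hint : ∀ l, Integrable (fun ω => X l ω ^ 2 / (X i ω * X i ω)) μ) :
    ∫ ω, (∑ l, X l ω ^ 2) / (X i ω * X i ω) ∂μ
      = 1 + ((Fintype.card ι : ℝ) - 1) * (∫ ω, X i₀ ω ^ 2 ∂μ) * ∫ ω, 1 / X i₀ ω ^ 2 ∂μ := by
  classical
  have hself : ∫ ω, X i ω ^ 2 / (X i ω * X i ω) ∂μ = 1 := by
    rw [integral_congr_ae (g := fun _ => (1 : ℝ)), integral_const, probReal_univ, one_smul]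
    filter_upwards [hne] with ω h
    field_simp
  have hother : ∀ l ∈ ({i}ᶜ : Finset ι), ∫ ω, X l ω ^ 2 / (X i ω * X i ω) ∂μ
      = (∫ ω, X i₀ ω ^ 2 ∂μ) * ∫ ω, 1 / X i₀ ω ^ 2 ∂μ := fun l hl => by
    rw [integral_sq_div_mul_self_of_indepFun (hX l) (hX i)
        (hindep.indepFun (by simpa using hl))]
    exact congr_arg₂ (· * ·) ((hident l).comp (measurable_id.pow_const 2)).integral_eq
      ((hident i).comp (measurable_const.div (measurable_id.pow_const 2))).integral_eq
  simp_rw [Finset.sum_div]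
  rw [integral_finsetSum _ fun l _ => hint l, Fintype.sum_eq_add_sum_compl i, hself,
    Finset.sum_congr rfl hother, Finset.sum_const, Finset.card_compl, Finset.card_singleton,
    nsmul_eq_mul, Nat.cast_pred (Fintype.card_pos_iff.mpr ⟨i⟩), mul_assoc]

end IndependentCoordinates

theorem stmt4_general {Ω : Type*} [MeasurableSpace Ω] (P : Measure Ω) [IsProbabilityMeasure P]
    {d : ℕ} (hd : 0 < d) (Δ : Ω → Fin d → ℝ) (κ₁ κ₂ : ℝ) (hκ₁ : 0 < κ₁)
    (hmeas : ∀ j, Measurable (fun ω => Δ ω j))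
    (hindep : iIndepFun
      (fun j ω => Δ ω j) P)
    (hsymm : ∀ j, Measure.map (fun ω => Δ ω j) P = Measure.map (fun ω => -(Δ ω j)) P)
    (hident : ∀ j, Measure.map (fun ω => Δ ω j) P
      = Measure.map (fun ω => Δ ω ⟨0, hd⟩) P)
    (hbound : ∀ j, ∀ᵐ ω ∂P, κ₁ ≤ |Δ ω j| ∧ |Δ ω j| ≤ κ₂) :
    ‖(Matrix.of fun i j : Fin d =>
        ∫ ω, (∑ l, (Δ ω l) ^ 2) / (Δ ω i * Δ ω j) ∂P) - (1 : Matrix (Fin d) (Fin d) ℝ)‖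
      = ((d : ℝ) - 1) * (∫ ω, (Δ ω ⟨0, hd⟩) ^ 2 ∂P) * (∫ ω, 1 / (Δ ω ⟨0, hd⟩) ^ 2 ∂P) := by
  have : Nonempty (Fin d) := ⟨⟨0, hd⟩⟩
  have hint := integrable_sq_div_mul_of_abs_bounds hmeas hκ₁ hbound
  have hne (i : Fin d) : ∀ᵐ ω ∂P, Δ ω i ≠ 0 := by
    filter_upwards [hbound i] with ω h
    exact abs_pos.mp (hκ₁.trans_le h.1)
  have hM : (Matrix.of fun i j : Fin d =>
        ∫ ω, (∑ l, (Δ ω l) ^ 2) / (Δ ω i * Δ ω j) ∂P) - 1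
      = (((d : ℝ) - 1) * (∫ ω, (Δ ω ⟨0, hd⟩) ^ 2 ∂P) * ∫ ω, 1 / (Δ ω ⟨0, hd⟩) ^ 2 ∂P) • 1 := by
    ext i j
    rcases eq_or_ne i j with rfl | hij
    · simp [integral_sum_sq_div_mul_self hmeas hindep
        (fun k => ⟨(hmeas k).aemeasurable, (hmeas _).aemeasurable, hident k⟩) (hne i)
        (fun l => hint i i l)]
    · simp [hij, integral_sum_sq_div_mul_of_ne hmeas hindep hij (hsymm j) (hint i j)]
  rw [hM, norm_smul, CStarRing.norm_one, mul_one, Real.norm_of_nonneg]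
  have hd1 : (1 : ℝ) ≤ d := by exact_mod_cast hd
  exact mul_nonneg (mul_nonneg (sub_nonneg.mpr hd1) (integral_nonneg fun _ => sq_nonneg _))
    (integral_nonneg fun _ => by positivity)

/-- Let `Δ` be a random vector in `ℝ^d` with mutually independent,
identically distributed entries, each symmetric about `0` with `|Δʲ| ∈ [κ₁, κ₂]`
a.s.  Then `‖E[(ΔᵀΔ)·Δ⁻¹Δ⁻ᵀ] − I‖ = (d−1)·E[(Δ¹)²]·E[1/(Δ¹)²]`, where the `(i,j)`
entry of `(ΔᵀΔ)Δ⁻¹Δ⁻ᵀ` is `(Σₗ (Δˡ)²)/(Δⁱ Δʲ)` and `‖·‖` is the operator norm. -/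
theorem stmt4 {Ω : Type*} [MeasurableSpace Ω] (P : Measure Ω) [IsProbabilityMeasure P]
    {d : ℕ} (hd : 0 < d) (Δ : Ω → Fin d → ℝ) (κ₁ κ₂ : ℝ) (hκ₁ : 0 < κ₁) (hκ₂ : 0 < κ₂)
    (hmeas : ∀ j, Measurable (fun ω => Δ ω j))
    (hindep : iIndepFun
      (fun j ω => Δ ω j) P)
    (hsymm : ∀ j, Measure.map (fun ω => Δ ω j) P = Measure.map (fun ω => -(Δ ω j)) P)
    (hident : ∀ j, Measure.map (fun ω => Δ ω j) P
      = Measure.map (fun ω => Δ ω ⟨0, hd⟩) P)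
    (hbound : ∀ j, ∀ᵐ ω ∂P, κ₁ ≤ |Δ ω j| ∧ |Δ ω j| ≤ κ₂) :
    ‖(Matrix.of fun i j : Fin d =>
        ∫ ω, (∑ l, (Δ ω l) ^ 2) / (Δ ω i * Δ ω j) ∂P) - (1 : Matrix (Fin d) (Fin d) ℝ)‖
      = ((d : ℝ) - 1) * (∫ ω, (Δ ω ⟨0, hd⟩) ^ 2 ∂P) * (∫ ω, 1 / (Δ ω ⟨0, hd⟩) ^ 2 ∂P) :=
  stmt4_general P hd Δ κ₁ κ₂ hκ₁ hmeas hindep hsymm hident hbound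
end

section
/- Let τ, σ > 0 with σ ∈ (0,1), and let g, d ∈ R^d, B ∈ R^{d×d}, c ∈ R^m. Define Δq = −τ(g^T d + (1/2)max{d^T B d, 0}) + ‖c‖. Suppose τ ≤ τ_trial where τ_trial = (1−σ)‖c‖/(g^T d + max{d^T B d, 0}) if g^T d + max{d^T B d, 0} > 0, and τ_trial = +∞ otherwise. Then Δq ≥ (τ/2)·max{d^T B d, 0} + σ‖c‖. -/
noncomputable def euclNorm {n : Type*} [Fintype n] (v : n → ℝ) : ℝ :=
  Real.sqrt (dotProduct v v)

theorem euclNorm_nonneg {n : Type*} [Fintype n] (v : n → ℝ) : 0 ≤ euclNorm v :=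
  Real.sqrt_nonneg _

/-- The hypothesis is `τ ≤ b / x` with `b / x` read as `+∞` when `x ≤ 0`, as in the trial-parameter rule. -/
theorem mul_le_of_imp_le_div {τ x b : ℝ} (hτ : 0 ≤ τ) (hb : 0 ≤ b)
    (h : 0 < x → τ ≤ b / x) : τ * x ≤ b := by
  rcases le_or_gt x 0 with hx | hx
  · exact (mul_nonpos_of_nonneg_of_nonpos hτ hx).trans hb
  · exact (le_div_iff₀ hx).1 (h hx)

theorem stmt17_general {n m : ℕ} (τ σ : ℝ) (hτ : 0 < τ) (hσ1 : σ < 1)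
    (g dvec : Fin n → ℝ) (B : Matrix (Fin n) (Fin n) ℝ) (c : Fin m → ℝ)
    (hτtrial : 0 < dotProduct g dvec + max (dotProduct dvec (B.mulVec dvec)) 0 →
      τ ≤ (1 - σ) * euclNorm c /
        (dotProduct g dvec + max (dotProduct dvec (B.mulVec dvec)) 0)) :
    (τ / 2) * max (dotProduct dvec (B.mulVec dvec)) 0 + σ * euclNorm c
      ≤ -τ * (dotProduct g dvec
            + (1 / 2) * max (dotProduct dvec (B.mulVec dvec)) 0)
        + euclNorm c := by
  have htrial := mul_le_of_imp_le_div hτ.le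
    (mul_nonneg (sub_nonneg.2 hσ1.le) (euclNorm_nonneg c)) hτtrial
  linarith

/-- Merit-parameter sufficient decrease: with
`Δq = −τ(gᵀd + (1/2)max{dᵀBd, 0}) + ‖c‖` and `τ ≤ τ_trial`, where
`τ_trial = (1−σ)‖c‖/(gᵀd + max{dᵀBd,0})` if `gᵀd + max{dᵀBd,0} > 0` (and `+∞`
otherwise), one has `Δq ≥ (τ/2)·max{dᵀBd, 0} + σ‖c‖`. -/
theorem stmt17 {n m : ℕ} (τ σ : ℝ) (hτ : 0 < τ) (hσ0 : 0 < σ) (hσ1 : σ < 1)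
    (g dvec : Fin n → ℝ) (B : Matrix (Fin n) (Fin n) ℝ) (c : Fin m → ℝ)
    (hτtrial : 0 < dotProduct g dvec + max (dotProduct dvec (B.mulVec dvec)) 0 →
      τ ≤ (1 - σ) * euclNorm c /
        (dotProduct g dvec + max (dotProduct dvec (B.mulVec dvec)) 0)) :
    (τ / 2) * max (dotProduct dvec (B.mulVec dvec)) 0 + σ * euclNorm c
      ≤ -τ * (dotProduct g dvec
            + (1 / 2) * max (dotProduct dvec (B.mulVec dvec)) 0)
        + euclNorm c :=
  stmt17_general τ σ hτ hσ1 g dvec B c hτtrial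
end

section
/- Let (a_k) be a nonnegative real sequence with Σ_{k=0}^∞ a_k = ∞, let ε* > 0, and suppose there exist a constant Υ > 0 and a sequence (q_k) of nonnegative reals such that |q_{k+1} − q_k| ≤ Υ a_k for all k, lim inf_k q_k = 0, and Σ_{k=0}^∞ a_k q_k² < ∞. Then lim_{k→∞} q_k = 0. -/
/-!
If `‖q m‖ ≥ 2ε` far out, follow `q` until it first drops below `ε`, which it must do since
`∑ aₖ = ∞` and `∑ aₖ ‖qₖ‖ᵖ < ∞`. On that stretch the drop `ε` is at most `Υ ∑ aₖ`, while
`‖qₖ‖ ≥ ε` throughout, so `εᵖ⁺¹ ≤ Υ ∑ aₖ ‖qₖ‖ᵖ`, which is impossible once the tail of the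
convergent series is small enough.
-/

open Filter Topology Finset

lemma Summable.sum_Ico_le_tsum_nat_add {f : ℕ → ℝ} (hf : Summable f) (hf0 : ∀ k, 0 ≤ f k)
    (m n : ℕ) : ∑ k ∈ Ico m n, f k ≤ ∑' k, f (k + m) := by
  rw [sum_Ico_eq_sum_range]
  simp_rw [add_comm m]
  exact ((summable_nat_add_iff m).2 hf).sum_le_tsum _ fun k _ => hf0 _

lemma exists_first_ge_of_frequently {P : ℕ → Prop} (h : ∃ᶠ n in atTop, P n) (m : ℕ) :
    ∃ n, m ≤ n ∧ P n ∧ ∀ k ∈ Ico m n, ¬ P k := by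
  classical
  have hex : ∃ n, m ≤ n ∧ P n := frequently_atTop.1 h m
  refine ⟨Nat.find hex, (Nat.find_spec hex).1, (Nat.find_spec hex).2, fun k hk hPk => ?_⟩
  rw [mem_Ico] at hk
  exact Nat.find_min hex hk.2 ⟨hk.1, hPk⟩

section

variable {E : Type*} [SeminormedAddCommGroup E] {a : ℕ → ℝ} {q : ℕ → E} {Υ : ℝ}

lemma frequently_norm_lt_of_summable_mul_norm_pow (ha : ∀ k, 0 ≤ a k)
    (hdiv : Tendsto (fun n => ∑ k ∈ range n, a k) atTop atTop) {p : ℕ}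
    (hsum : Summable fun k => a k * ‖q k‖ ^ p) {e : ℝ} (he : 0 < e) :
    ∃ᶠ n in atTop, ‖q n‖ < e := by
  refine fun hlarge => (not_summable_iff_tendsto_nat_atTop_of_nonneg ha).2 hdiv ?_
  refine (hsum.div_const (e ^ p)).of_norm_bounded_eventually_nat ?_
  filter_upwards [hlarge] with k hk
  rw [Real.norm_of_nonneg (ha k), le_div_iff₀ (by positivity)]
  exact mul_le_mul_of_nonneg_left (pow_le_pow_left₀ he.le (not_lt.1 hk) p) (ha k)

lemma norm_sub_norm_le_mul_sum_Ico (hlip : ∀ k, ‖q (k + 1) - q k‖ ≤ Υ * a k) {m n : ℕ}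
    (hmn : m ≤ n) : ‖q m‖ - ‖q n‖ ≤ Υ * ∑ k ∈ Ico m n, a k := by
  calc ‖q m‖ - ‖q n‖ ≤ dist (q m) (q n) := by rw [dist_eq_norm]; exact norm_sub_norm_le _ _
    _ ≤ ∑ k ∈ Ico m n, dist (q k) (q (k + 1)) := dist_le_Ico_sum_dist q hmn
    _ ≤ ∑ k ∈ Ico m n, Υ * a k := sum_le_sum fun k _ => by
      rw [dist_comm, dist_eq_norm]; exact hlip k
    _ = Υ * ∑ k ∈ Ico m n, a k := (mul_sum ..).symm

lemma pow_succ_le_mul_sum_Ico_of_crossing (ha : ∀ k, 0 ≤ a k) (hΥ : 0 ≤ Υ)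
    (hlip : ∀ k, ‖q (k + 1) - q k‖ ≤ Υ * a k) {e : ℝ} (he : 0 ≤ e) {m n : ℕ} (hmn : m ≤ n)
    (hm : 2 * e ≤ ‖q m‖) (hn : ‖q n‖ < e) (hbetween : ∀ k ∈ Ico m n, e ≤ ‖q k‖) (p : ℕ) :
    e ^ (p + 1) ≤ Υ * ∑ k ∈ Ico m n, a k * ‖q k‖ ^ p := by
  have hdrop : e ≤ Υ * ∑ k ∈ Ico m n, a k := by
    linarith [norm_sub_norm_le_mul_sum_Ico hlip hmn]
  calc e ^ (p + 1) = e ^ p * e := pow_succ e p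
    _ ≤ e ^ p * (Υ * ∑ k ∈ Ico m n, a k) := by gcongr
    _ = Υ * ∑ k ∈ Ico m n, a k * e ^ p := by rw [mul_sum, mul_sum, mul_sum]; ring_nf
    _ ≤ Υ * ∑ k ∈ Ico m n, a k * ‖q k‖ ^ p := by
      gcongr with k hk
      · exact ha k
      · exact hbetween k hk

theorem tendsto_zero_of_summable_mul_norm_pow (ha : ∀ k, 0 ≤ a k) (hΥ : 0 ≤ Υ)
    (hdiv : Tendsto (fun n => ∑ k ∈ range n, a k) atTop atTop)
    (hlip : ∀ k, ‖q (k + 1) - q k‖ ≤ Υ * a k) {p : ℕ}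
    (hsum : Summable fun k => a k * ‖q k‖ ^ p) : Tendsto q atTop (𝓝 0) := by
  rw [NormedAddGroup.tendsto_nhds_zero]
  intro ε hε
  have he : 0 < ε / 2 := half_pos hε
  have htail : ∀ᶠ m in atTop, Υ * ∑' k, a (k + m) * ‖q (k + m)‖ ^ p < (ε / 2) ^ (p + 1) := by
    have := (tendsto_sum_nat_add fun k => a k * ‖q k‖ ^ p).const_mul Υ
    rw [mul_zero] at this
    exact this.eventually (gt_mem_nhds (by positivity))
  filter_upwards [htail] with m hm
  by_contra! hqm
  obtain ⟨n, hmn, hn, hbetween⟩ :=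
    exists_first_ge_of_frequently (frequently_norm_lt_of_summable_mul_norm_pow ha hdiv hsum he) m
  have hcross := pow_succ_le_mul_sum_Ico_of_crossing ha hΥ hlip he.le hmn (by linarith) hn
    (fun k hk => not_lt.1 (hbetween k hk)) p
  have htail_ge := mul_le_mul_of_nonneg_left
    (hsum.sum_Ico_le_tsum_nat_add (fun k => by have := ha k; positivity) m n) hΥ
  linarith

end

theorem stmt19_general (a q : ℕ → ℝ) (Υ : ℝ) (hΥ : 0 < Υ)
    (ha : ∀ k, 0 ≤ a k)
    (hdiv : Tendsto (fun n => ∑ k ∈ Finset.range n, a k) atTop atTop)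
    (hlip : ∀ k, |q (k + 1) - q k| ≤ Υ * a k)
    (hsum : Summable (fun k => a k * (q k) ^ 2)) :
    Tendsto q atTop (nhds 0) :=
  tendsto_zero_of_summable_mul_norm_pow (p := 2) ha hΥ.le hdiv
    (by simpa only [Real.norm_eq_abs] using hlip)
    (by simpa only [Real.norm_eq_abs, sq_abs] using hsum)

/-- The liminf-to-lim upgrade: if `a_k ≥ 0` with `Σ a_k = ∞`,
`ε* > 0`, and `q_k ≥ 0` satisfies `|q_{k+1} − q_k| ≤ Υ a_k`, `liminf q_k = 0`, and
`Σ a_k q_k² < ∞`, then `q_k → 0`. -/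
theorem stmt19 (a q : ℕ → ℝ) (εstar Υ : ℝ) (hεstar : 0 < εstar) (hΥ : 0 < Υ)
    (ha : ∀ k, 0 ≤ a k)
    (hdiv : Tendsto (fun n => ∑ k ∈ Finset.range n, a k) atTop atTop)
    (hq : ∀ k, 0 ≤ q k)
    (hlip : ∀ k, |q (k + 1) - q k| ≤ Υ * a k)
    (hliminf : Filter.liminf q atTop = 0)
    (hsum : Summable (fun k => a k * (q k) ^ 2)) :
    Tendsto q atTop (nhds 0) :=
  stmt19_general a q Υ hΥ ha hdiv hlip hsum
end
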